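/- For m ≥ 1 and n ≥ 0, Σ_{T} Π_{v∈I(T)} (x + 1/h_v) = (1/((mn+1)·n!)) · Π_{i=0}^{n−1} ((mn+1+i)x + mn+1−mi), where the sum is over all complete (m+1)-ary trees T with n internal vertices. -/

import Mathlib

open Polynomial

inductive PlaneTree : Type where
  | node : List PlaneTree → PlaneTree

namespace PlaneTree

/-- total number of vertices -/
def numVertices : PlaneTree → ℕ
  | node ts => 1 + (ts.attach.map (fun t => numVertices t.1)).sum
decreasing_by simp only [PlaneTree.node.sizeOf_spec]; exact Nat.lt_add_left 1 (List.sizeOf_lt_of_mem t.2)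

/-- number of internal vertices (vertices with at least one child) -/
def numInternal : PlaneTree → ℕ
  | node ts => (if ts.isEmpty then 0 else 1) + (ts.attach.map (fun t => numInternal t.1)).sum
decreasing_by simp only [PlaneTree.node.sizeOf_spec]; exact Nat.lt_add_left 1 (List.sizeOf_lt_of_mem t.2)

/-- product of `g h_v` over all internal vertices `v`, where `h_v` is the number of
internal vertices of the subtree rooted at `v` -/
def internalHookProd {α : Type} [CommMonoid α] (g : ℕ → α) : PlaneTree → α
  | node ts =>
    (if ts.isEmpty then 1 else g (numInternal (node ts))) *
      (ts.attach.map (fun t => internalHookProd g t.1)).prod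
decreasing_by simp only [PlaneTree.node.sizeOf_spec]; exact Nat.lt_add_left 1 (List.sizeOf_lt_of_mem t.2)

/-- product of `g h_v` over all vertices `v`, where `h_v` is the number of
vertices of the subtree rooted at `v` -/
def vertexHookProd {α : Type} [CommMonoid α] (g : ℕ → α) : PlaneTree → α
  | node ts =>
    g (numVertices (node ts)) * (ts.attach.map (fun t => vertexHookProd g t.1)).prod
decreasing_by simp only [PlaneTree.node.sizeOf_spec]; exact Nat.lt_add_left 1 (List.sizeOf_lt_of_mem t.2)

/-- every internal vertex has exactly `a` children -/
def IsFullAry (a : ℕ) : PlaneTree → Prop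
  | node ts => (ts.length = 0 ∨ ts.length = a) ∧ ∀ t ∈ ts, IsFullAry a t

/-- `IsKMAry k m b T`: with the root of `T` viewed as being on a level of parity `b`
(`b = false` meaning even), every vertex on an even level has `k` children and
every vertex on an odd level has `m` or `0` children. -/
def IsKMAry (k m : ℕ) : Bool → PlaneTree → Prop
  | b, node ts =>
    (if b then ts.length = m ∨ ts.length = 0 else ts.length = k) ∧
      ∀ t ∈ ts, IsKMAry k m (!b) t

/-- number of vertices on levels of parity `b`, the root having parity `cur` -/
def parityVertices (b cur : Bool) : PlaneTree → ℕ
  | node ts =>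
    (if cur = b then 1 else 0) + (ts.attach.map (fun t => parityVertices b (!cur) t.1)).sum
termination_by T => sizeOf T
decreasing_by simp only [PlaneTree.node.sizeOf_spec]; exact Nat.lt_add_left 1 (List.sizeOf_lt_of_mem t.2)

/-- number of internal vertices on levels of parity `b`, the root having parity `cur` -/
def parityInternal (b cur : Bool) : PlaneTree → ℕ
  | node ts =>
    (if cur = b ∧ ¬ts.isEmpty then 1 else 0) +
      (ts.attach.map (fun t => parityInternal b (!cur) t.1)).sum
termination_by T => sizeOf T
decreasing_by simp only [PlaneTree.node.sizeOf_spec]; exact Nat.lt_add_left 1 (List.sizeOf_lt_of_mem t.2)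

/-- the order of a `(k,m)`-ary tree: the number of internal (crucial) vertices on odd levels -/
def kmOrder (T : PlaneTree) : ℕ := parityInternal true false T

end PlaneTree

/-!
Evaluate both sides at a point `x ≠ m` and put `c = (x + 1) / (m - x)`, so that
`(m - x) c = x + 1`. Removing the root of a complete `(m+1)`-ary tree with `n + 1` internal
vertices leaves an ordered `(m+1)`-tuple of such trees with `n` internal vertices in total, so
the tree sums `F n` satisfy `F (n + 1) = (x + 1/(n+1)) · [zⁿ] F(z)^(m+1)`. The Raney
coefficients `A_k(t, r) = r / (t k + r) · C(t k + r, k)` satisfy the Rothe–Hagen convolution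
`Σ_k A_k(t, r) A_{N-k}(t, s) = A_N(t, r + s)`, and for `t = m c` the sequence
`(m - x)ⁿ A_n(t, c)` obeys the same recursion; hence `F n = (m - x)ⁿ A_n(m c, c)`, which is the
right-hand side at `x`. Polynomials agreeing at infinitely many points are equal.
-/

open Finset

theorem Set.Finite.setOf_list_length_le {α : Type*} {s : Set α} (hs : s.Finite) (j : ℕ) :
    {l : List α | l.length ≤ j ∧ ∀ x ∈ l, x ∈ s}.Finite := by
  have := hs.to_subtype
  refine ((List.finite_length_le s j).image (List.map (↑))).subset ?_
  rintro l ⟨hl, hs⟩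
  obtain ⟨l', rfl⟩ : l ∈ Set.range (List.map ((↑) : s → α)) := by
    rwa [Set.range_list_map_coe]
  exact ⟨l', by simpa using hl, rfl⟩

namespace PlaneTree

@[elab_as_elim]
theorem induction {P : PlaneTree → Prop} (node : ∀ ts, (∀ t ∈ ts, P t) → P (node ts)) :
    ∀ T, P T
  | .node ts => node ts fun t _ => induction node t
decreasing_by
  simp only [PlaneTree.node.sizeOf_spec]; exact Nat.lt_add_left 1 (List.sizeOf_lt_of_mem ‹_›)

@[simp]
theorem numInternal_node_nil : numInternal (node []) = 0 := by
  simp [numInternal]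

theorem numInternal_node_of_ne_nil {ts : List PlaneTree} (h : ts ≠ []) :
    numInternal (node ts) = (ts.map numInternal).sum + 1 := by
  rw [numInternal, add_comm]
  simp [h, List.isEmpty_iff]

theorem numInternal_eq_zero_iff {ts : List PlaneTree} : numInternal (node ts) = 0 ↔ ts = [] := by
  rcases eq_or_ne ts [] with rfl | h
  · simp
  · simp [numInternal_node_of_ne_nil h, h]

theorem numInternal_lt_of_mem {t : PlaneTree} {ts : List PlaneTree} (h : t ∈ ts) :
    numInternal t < numInternal (node ts) := by
  rw [numInternal_node_of_ne_nil (List.ne_nil_of_mem h), Nat.lt_succ_iff]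
  exact List.le_sum_of_mem (List.mem_map_of_mem h)

theorem internalHookProd_node {α : Type} [CommMonoid α] (g : ℕ → α) (ts : List PlaneTree) :
    internalHookProd g (node ts) =
      (if ts.isEmpty then 1 else g (numInternal (node ts))) *
        (ts.map (internalHookProd g)).prod := by
  rw [internalHookProd, List.attach_map_val]

theorem map_internalHookProd {α β : Type} [CommMonoid α] [CommMonoid β] (φ : α →* β)
    (g : ℕ → α) (T : PlaneTree) :
    φ (internalHookProd g T) = internalHookProd (φ ∘ g) T := by
  induction T using PlaneTree.induction with
  | node ts ih =>
    rw [internalHookProd_node, internalHookProd_node, map_mul, map_list_prod, List.map_map,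
      List.map_congr_left (f := φ ∘ internalHookProd g) ih]
    split_ifs <;> simp

theorem isFullAry_node {a : ℕ} {ts : List PlaneTree} :
    IsFullAry a (node ts) ↔
      (ts.length = 0 ∨ ts.length = a) ∧ ∀ t ∈ ts, IsFullAry a t := by
  rw [IsFullAry]

theorem finite_setOf_isFullAry_numInternal_lt (a : ℕ) :
    ∀ n, {T | IsFullAry a T ∧ numInternal T < n}.Finite
  | 0 => by simp
  | n + 1 => by
    refine (((finite_setOf_isFullAry_numInternal_lt a n).setOf_list_length_le a).image
      node).subset ?_
    rintro ⟨ts⟩ ⟨hfull, hn⟩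
    rw [isFullAry_node] at hfull
    refine ⟨ts, ⟨by omega, fun t ht => ⟨hfull.2 t ht, ?_⟩⟩, rfl⟩
    have := numInternal_lt_of_mem ht
    omega

theorem finite_setOf_isFullAry_numInternal_eq (a n : ℕ) :
    {T | IsFullAry a T ∧ numInternal T = n}.Finite :=
  (finite_setOf_isFullAry_numInternal_lt a (n + 1)).subset fun _ ⟨hT, hn⟩ => ⟨hT, by omega⟩

theorem finite_setOf_isFullAry_forest (a j l : ℕ) :
    {ts : List PlaneTree | ts.length = j ∧ (∀ t ∈ ts, IsFullAry a t) ∧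
      (ts.map numInternal).sum = l}.Finite := by
  refine ((finite_setOf_isFullAry_numInternal_lt a (l + 1)).setOf_list_length_le j).subset ?_
  rintro ts ⟨hlen, hfull, hsum⟩
  refine ⟨hlen.le, fun t ht => ⟨hfull t ht, ?_⟩⟩
  have := List.le_sum_of_mem (List.mem_map_of_mem (f := numInternal) ht)
  omega

theorem node_injective : Function.Injective node := fun _ _ h => node.inj h

noncomputable def fullTrees (a n : ℕ) : Finset PlaneTree :=
  (finite_setOf_isFullAry_numInternal_eq a n).toFinset

noncomputable def fullForests (a j l : ℕ) : Finset (List PlaneTree) :=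
  (finite_setOf_isFullAry_forest a j l).toFinset

theorem mem_fullTrees {a n : ℕ} {T : PlaneTree} :
    T ∈ fullTrees a n ↔ IsFullAry a T ∧ numInternal T = n :=
  Set.Finite.mem_toFinset _

theorem mem_fullForests {a j l : ℕ} {ts : List PlaneTree} :
    ts ∈ fullForests a j l ↔
      ts.length = j ∧ (∀ t ∈ ts, IsFullAry a t) ∧ (ts.map numInternal).sum = l :=
  Set.Finite.mem_toFinset _

section Sums

variable {α : Type} [CommSemiring α] (g : ℕ → α)

noncomputable def treeSum (a n : ℕ) : α :=
  ∑ T ∈ fullTrees a n, internalHookProd g T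

noncomputable def forestSum (a j l : ℕ) : α :=
  ∑ ts ∈ fullForests a j l, (ts.map (internalHookProd g)).prod

theorem finsum_eq_treeSum (a n : ℕ) :
    ∑ᶠ T : {T : PlaneTree // IsFullAry a T ∧ numInternal T = n}, internalHookProd g T.1 =
      treeSum g a n :=
  (finsum_subtype_eq_finsum_cond _).trans (finsum_mem_eq_finite_toFinset_sum _ _)

theorem map_treeSum {β : Type} [CommSemiring β] (φ : α →+* β) (a n : ℕ) :
    φ (treeSum g a n) = treeSum (φ ∘ g) a n := by
  simp only [treeSum, map_sum]
  exact sum_congr rfl fun T _ => map_internalHookProd φ.toMonoidHom g T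

theorem treeSum_zero (a : ℕ) : treeSum g a 0 = 1 := by
  have : fullTrees a 0 = {node []} := by
    ext ⟨ts⟩
    simp only [mem_fullTrees, numInternal_eq_zero_iff, isFullAry_node, mem_singleton, node.injEq]
    constructor
    · exact And.right
    · rintro rfl; simp
  simp [treeSum, this, internalHookProd_node]

theorem treeSum_succ {a : ℕ} (ha : a ≠ 0) (n : ℕ) :
    treeSum g a (n + 1) = g (n + 1) * forestSum g a a n := by
  have : fullTrees a (n + 1) = (fullForests a a n).map ⟨node, node_injective⟩ := by
    ext ⟨ts⟩
    simp only [mem_map, mem_fullTrees, mem_fullForests, isFullAry_node,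
      Function.Embedding.coeFn_mk, node.injEq, exists_eq_right]
    rcases eq_or_ne ts [] with rfl | hts
    · simp [Ne.symm ha]
    · simp [numInternal_node_of_ne_nil hts, hts, and_assoc]
  rw [treeSum, forestSum, this, sum_map, mul_sum]
  refine sum_congr rfl fun ts hts => ?_
  obtain ⟨hlen, -, hsum⟩ := mem_fullForests.1 hts
  have hne : ts ≠ [] := by rintro rfl; exact ha hlen.symm
  simp [internalHookProd_node, hne, numInternal_node_of_ne_nil, hsum]

theorem forestSum_zero (a l : ℕ) : forestSum g a 0 l = if l = 0 then 1 else 0 := by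
  have : fullForests a 0 l = if l = 0 then {[]} else ∅ := by
    ext ts
    simp only [mem_fullForests, List.length_eq_zero_iff]
    split_ifs with hl
    · subst hl
      refine ⟨fun h => mem_singleton.2 h.1, fun h => ?_⟩
      simp [mem_singleton.1 h]
    · simp only [notMem_empty, iff_false]
      rintro ⟨rfl, -, rfl⟩
      exact hl rfl
  rw [forestSum, this]
  split_ifs <;> simp

theorem forestSum_succ (a j l : ℕ) :
    forestSum g a (j + 1) l =
      ∑ p ∈ antidiagonal l, treeSum g a p.1 * forestSum g a j p.2 := by
  simp_rw [treeSum, forestSum, sum_mul_sum, ← sum_product', sum_sigma']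
  symm
  refine sum_bij (fun x _ => x.2.1 :: x.2.2) ?_ ?_ ?_ ?_
  · rintro ⟨⟨k, k'⟩, t, ts⟩ hx
    simp only [mem_sigma, HasAntidiagonal.mem_antidiagonal, mem_product, mem_fullTrees,
      mem_fullForests] at hx
    obtain ⟨rfl, ⟨ht, rfl⟩, hlen, hts, rfl⟩ := hx
    refine mem_fullForests.2 ⟨by simp [hlen], ?_, by simp⟩
    simpa [ht] using hts
  · rintro ⟨⟨k, k'⟩, t, ts⟩ hx ⟨⟨k₂, k₂'⟩, t₂, ts₂⟩ hx₂ h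
    simp only [List.cons.injEq] at h
    obtain ⟨rfl, rfl⟩ := h
    simp only [mem_sigma, HasAntidiagonal.mem_antidiagonal, mem_product, mem_fullTrees] at hx hx₂
    obtain ⟨rfl, ⟨-, rfl⟩, -⟩ := hx
    obtain ⟨hl, ⟨-, rfl⟩, -⟩ := hx₂
    obtain rfl : k₂' = k' := by omega
    rfl
  · rintro (_ | ⟨t, ts⟩) hts
    · simp [mem_fullForests] at hts
    · simp only [mem_fullForests, List.length_cons, List.mem_cons, forall_eq_or_imp,
        List.map_cons, List.sum_cons] at hts
      obtain ⟨hlen, ⟨ht, hts⟩, hsum⟩ := hts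
      refine ⟨⟨(numInternal t, (ts.map numInternal).sum), t, ts⟩, ?_, rfl⟩
      rw [mem_sigma, HasAntidiagonal.mem_antidiagonal, mem_product, mem_fullTrees,
        mem_fullForests]
      exact ⟨hsum, ⟨ht, rfl⟩, Nat.add_one_inj.1 hlen, hts, rfl⟩
  · intro x _
    simp

end Sums

end PlaneTree

section Raney

variable {K : Type*} [Field K]

/-- The Raney coefficient `r / (t k + r) * (t k + r).choose k`, written without the division. -/
noncomputable def raney (t r : K) : ℕ → K
  | 0 => 1
  | k + 1 => r * (∏ i ∈ range k, (t * (k + 1) + r - (i + 1))) / (k + 1).factorial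

noncomputable def raneyPoly (t : K) : ℕ → K[X]
  | 0 => 1
  | k + 1 =>
    C ((k + 1).factorial : K)⁻¹ * (X * ∏ i ∈ range k, (X + C (t * (k + 1) - (i + 1))))

theorem eval_raneyPoly (t r : K) (k : ℕ) : (raneyPoly t k).eval r = raney t r k := by
  cases k with
  | zero => simp [raney, raneyPoly]
  | succ k =>
    simp only [raney, raneyPoly, eval_mul, eval_C, eval_X, eval_prod, eval_add]
    rw [div_eq_inv_mul]
    congr 2
    exact prod_congr rfl fun i _ => by ring

@[simp]
theorem raney_zero (t r : K) : raney t r 0 = 1 := rfl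

variable [CharZero K]

theorem raney_add_one (t r : K) (k : ℕ) :
    raney t (r + 1) (k + 1) = raney t r (k + 1) + raney t (r + t) k := by
  cases k with
  | zero => simp [raney]
  | succ k =>
    let P := ∏ i ∈ range k, (t * (k + 2) + r - (i + 1))
    have h₁ : raney t (r + 1) (k + 2) =
        (r + 1) * (t * (k + 2) + r) * P / (k + 2).factorial := by
      simp only [raney, prod_range_succ', P]
      push_cast
      ring_nf
    have h₂ : raney t r (k + 2) = r * P * (t * (k + 2) + r - (k + 1)) / (k + 2).factorial := by
      simp only [raney, prod_range_succ, P]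
      push_cast
      ring_nf
    have h₃ : raney t (r + t) (k + 1) = (r + t) * P / (k + 1).factorial := by
      simp only [raney, P]
      ring_nf
    have hk : ((k + 1 + 1 : ℕ) : K) ≠ 0 := Nat.cast_ne_zero.2 (by omega)
    have hf : ((k + 1).factorial : K) ≠ 0 := Nat.cast_ne_zero.2 (Nat.factorial_ne_zero _)
    rw [h₁, h₂, h₃, Nat.factorial_succ (k + 1), Nat.cast_mul]
    field_simp
    push_cast
    ring

theorem sum_antidiagonal_raney_mul_raney (t : K) (N : ℕ) (r s : K) :
    ∑ p ∈ antidiagonal N, raney t r p.1 * raney t s p.2 = raney t (r + s) N := by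
  induction N generalizing r s with
  | zero => simp [raney]
  | succ M ih =>
    -- both sides are polynomials in `r`, so it suffices to take `r` natural and induct on it
    have hnat (n : ℕ) : ∑ p ∈ antidiagonal (M + 1), raney t n p.1 * raney t s p.2 =
        raney t (n + s) (M + 1) := by
      induction n with
      | zero => simp [Nat.sum_antidiagonal_succ, raney]
      | succ n ihn =>
        push_cast
        calc ∑ p ∈ antidiagonal (M + 1), raney t (n + 1) p.1 * raney t s p.2
            = ∑ p ∈ antidiagonal (M + 1), raney t n p.1 * raney t s p.2 +
                ∑ p ∈ antidiagonal M, raney t (n + t) p.1 * raney t s p.2 := by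
              simp only [Nat.sum_antidiagonal_succ, raney_add_one, add_mul, sum_add_distrib,
                raney_zero, add_assoc]
          _ = raney t (n + 1 + s) (M + 1) := by
              rw [ihn, ih, add_right_comm _ t, ← raney_add_one, add_right_comm (n : K) 1 s]
    have hpoly : ∑ p ∈ antidiagonal (M + 1), raneyPoly t p.1 * C (raney t s p.2) =
        (raneyPoly t (M + 1)).comp (X + C s) := by
      refine eq_of_infinite_eval_eq _ _
        ((Set.infinite_range_of_injective Nat.cast_injective).mono ?_)
      rintro _ ⟨n, rfl⟩
      simpa [eval_finsetSum, eval_raneyPoly] using hnat n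
    simpa [eval_finsetSum, eval_raneyPoly] using congr_arg (eval r) hpoly

theorem raney_succ_mul (a c : K) (n : ℕ) :
    ((n : K) + 1) * (a + 1) * raney (a * c) c (n + 1) =
      (c * (a * (n + 1) + 1) - n) * raney (a * c) ((a + 1) * c) n := by
  cases n with
  | zero =>
    simp only [raney, CharP.cast_eq_zero, zero_add, one_mul, mul_one, sub_zero, range_zero,
      prod_empty, Nat.factorial_one, Nat.cast_one, div_one]
    ring
  | succ k =>
    have hprod : ∏ i ∈ range k, (a * c * ((k + 1 : ℕ) + 1) + c - (i + 1)) =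
        ∏ i ∈ range k, (a * c * (k + 1) + (a + 1) * c - (i + 1)) :=
      prod_congr rfl fun _ _ => by push_cast; ring
    have hk : ((k + 1 + 1 : ℕ) : K) ≠ 0 := Nat.cast_ne_zero.2 (by omega)
    have hf : ((k + 1).factorial : K) ≠ 0 := Nat.cast_ne_zero.2 (Nat.factorial_ne_zero _)
    simp only [raney, prod_range_succ, hprod, Nat.factorial_succ (k + 1), Nat.cast_mul]
    field_simp
    push_cast
    ring

theorem hook_mul_raney {m : ℕ} {x c : K} (hc : (m - x) * c = x + 1) (n : ℕ) :
    (x + 1 / ((n : K) + 1)) * raney (m * c) ((m + 1) * c) n =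
      (m - x) * raney (m * c) c (n + 1) := by
  have hm : (m : K) + 1 ≠ 0 := by exact_mod_cast Nat.succ_ne_zero m
  have hn : (n : K) + 1 ≠ 0 := by exact_mod_cast Nat.succ_ne_zero n
  have key := raney_succ_mul (m : K) c n
  set R := raney (m * c) ((m + 1) * c) n
  set R' := raney (m * c) c (n + 1)
  have h : ((n + 1) * x + 1) * R = (n + 1) * ((m - x) * R') := by
    refine mul_left_cancel₀ hm ?_
    linear_combination (x - m) * key - (m * (n + 1) + 1) * R * hc
  field_simp
  linear_combination h

theorem pow_mul_raney_eq_prod {m : ℕ} {x c : K} (hc : (m - x) * c = x + 1) (n : ℕ) :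
    (m - x) ^ n * raney (m * c) c n =
      1 / (((m * n + 1) * n.factorial : ℕ) : K) *
        ∏ i ∈ range n,
          (((m * n + 1 + i : ℕ) : K) * x + (((m * n + 1 : ℕ) : K) - m * i)) := by
  rcases n with _ | k
  · simp
  have hfactor (i : ℕ) :
      ((m * (k + 1) + 1 + (i + 1) : ℕ) : K) * x +
          (((m * (k + 1) + 1 : ℕ) : K) - m * (i + 1 : ℕ)) =
        (m - x) * (m * c * (k + 1) + c - (i + 1)) := by
    push_cast
    linear_combination (-(m * (k + 1) + 1 : K)) * hc
  have hfirst : ((m * (k + 1) + 1 + 0 : ℕ) : K) * x +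
        (((m * (k + 1) + 1 : ℕ) : K) - m * (0 : ℕ)) = (m * (k + 1) + 1) * ((m - x) * c) := by
    push_cast
    linear_combination (-(m * (k + 1) + 1 : K)) * hc
  have hm : ((m * (k + 1) + 1 : ℕ) : K) ≠ 0 := Nat.cast_ne_zero.2 (Nat.succ_ne_zero _)
  have hf : ((k + 1).factorial : K) ≠ 0 := Nat.cast_ne_zero.2 (Nat.factorial_ne_zero _)
  rw [prod_range_succ', prod_congr rfl fun i _ => hfactor i, prod_mul_distrib, prod_const,
    card_range, hfirst, raney, Nat.cast_mul]
  field_simp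
  push_cast
  ring

end Raney

namespace PlaneTree

variable {K : Type} [Field K] [CharZero K]

theorem forestSum_eq_of_treeSum_eq {g : ℕ → K} {a l : ℕ} {u t c : K}
    (h : ∀ k ≤ l, treeSum g a k = u ^ k * raney t c k) (j : ℕ) :
    forestSum g a j l = u ^ l * raney t (j * c) l := by
  induction j generalizing l with
  | zero =>
    rw [forestSum_zero]
    rcases l with _ | l <;> simp [raney]
  | succ j ih =>
    rw [forestSum_succ]
    calc ∑ p ∈ antidiagonal l, treeSum g a p.1 * forestSum g a j p.2
        = ∑ p ∈ antidiagonal l, u ^ l * (raney t c p.1 * raney t (j * c) p.2) := by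
          refine sum_congr rfl fun p hp => ?_
          have hp : p.1 + p.2 = l := HasAntidiagonal.mem_antidiagonal.1 hp
          rw [h p.1 (by omega), ih fun k hk => h k (by omega), ← hp, pow_add]
          ring
      _ = u ^ l * raney t ((j + 1 : ℕ) * c) l := by
          rw [← mul_sum, sum_antidiagonal_raney_mul_raney]
          push_cast
          ring_nf

theorem treeSum_hook_eq_pow_mul_raney {m : ℕ} {x c : K} (hc : (m - x) * c = x + 1) (n : ℕ) :
    treeSum (fun h => x + 1 / (h : K)) (m + 1) n = (m - x) ^ n * raney (m * c) c n := by
  induction n using Nat.strong_induction_on with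
  | _ n ih =>
    rcases n with _ | n
    · simp [treeSum_zero]
    · rw [treeSum_succ _ m.succ_ne_zero, forestSum_eq_of_treeSum_eq fun k hk => ih k (by omega)]
      push_cast
      linear_combination ((m : K) - x) ^ n * hook_mul_raney hc n

end PlaneTree

theorem hook_poly_mary_shifted_general (m n : ℕ) :
    (∑ᶠ T : {T : PlaneTree // PlaneTree.IsFullAry (m + 1) T ∧ PlaneTree.numInternal T = n},
        PlaneTree.internalHookProd
          (fun h => Polynomial.X + Polynomial.C (1 / (h : ℚ))) T.1)
      = Polynomial.C (1 / (((m * n + 1) * n.factorial : ℕ) : ℚ)) *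
        ∏ i ∈ Finset.range n,
          (Polynomial.C ((m * n + 1 + i : ℕ) : ℚ) * Polynomial.X +
            Polynomial.C (((m * n + 1 : ℕ) : ℚ) - m * i)) := by
  rw [PlaneTree.finsum_eq_treeSum]
  refine eq_of_infinite_eval_eq _ _
    ((Set.finite_singleton (m : ℚ)).infinite_compl.mono fun x hx => ?_)
  have hc : ((m : ℚ) - x) * ((x + 1) / (m - x)) = x + 1 :=
    mul_div_cancel₀ _ (sub_ne_zero.2 (Ne.symm hx))
  show eval x _ = eval x _
  rw [← coe_evalRingHom, PlaneTree.map_treeSum]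
  simp only [Function.comp_def, coe_evalRingHom, eval_add, eval_X, eval_C, eval_mul, eval_prod]
  rw [PlaneTree.treeSum_hook_eq_pow_mul_raney hc, pow_mul_raney_eq_prod hc]

/-- `Σ_T Π_{v∈I(T)} (x + 1/h_v) = (1/((mn+1)·n!)) · Π_{i=0}^{n-1} ((mn+1+i)x + mn+1-mi)`,
summed over all complete `(m+1)`-ary trees `T` with `n` internal vertices. -/
theorem hook_poly_mary_shifted (m n : ℕ) (hm : 1 ≤ m) :
    (∑ᶠ T : {T : PlaneTree // PlaneTree.IsFullAry (m + 1) T ∧ PlaneTree.numInternal T = n},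
        PlaneTree.internalHookProd
          (fun h => Polynomial.X + Polynomial.C (1 / (h : ℚ))) T.1)
      = Polynomial.C (1 / (((m * n + 1) * n.factorial : ℕ) : ℚ)) *
        ∏ i ∈ Finset.range n,
          (Polynomial.C ((m * n + 1 + i : ℕ) : ℚ) * Polynomial.X +
            Polynomial.C (((m * n + 1 : ℕ) : ℚ) - m * i)) :=
  hook_poly_mary_shifted_general m n
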